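/- For every integer n ≥ 0, ∑_{p=0}^{⌊n/4⌋} (1/(4p+1))·C(5p, p)·C(n+p, 5p) = ∑_{p=0}^{⌊n/2⌋} (−1)^p·(1/(n+1))·C(n+p, n)·C(2n−2p, n), as an identity of rational numbers. -/
import Mathlib


open Finset

/-- product (x)(x+1)...(x+m-1) -/
def pr (x : ℚ) (m : ℕ) : ℚ := ∏ j ∈ Finset.range m, (x + j)

lemma pr_zero (x : ℚ) : pr x 0 = 1 := by simp [pr]

lemma pr_succ (x : ℚ) (m : ℕ) : pr x (m+1) = pr x m * (x + m) := by
  simp [pr, Finset.prod_range_succ]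

lemma pr_add (x : ℚ) (a b : ℕ) : pr x (a+b) = pr x a * pr (x + a) b := by
  unfold pr
  rw [Finset.prod_range_add]
  congr 1
  refine Finset.prod_congr rfl fun j _ => ?_
  push_cast; ring

lemma pr_eq_zero (x : ℚ) (m j : ℕ) (hj : j < m) (h : x + j = 0) : pr x m = 0 :=
  Finset.prod_eq_zero (Finset.mem_range.2 hj) h

lemma asc_eq_prod (n k : ℕ) : n.ascFactorial k = ∏ j ∈ Finset.range k, (n + j) := by
  induction k with
  | zero => simp
  | succ k ih => rw [Nat.ascFactorial_succ, Finset.prod_range_succ, ih, mul_comm]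

/-- key cast lemma -/
lemma choose_cast_prod (a k : ℕ) :
    (((a+k).choose k : ℚ)) * (k.factorial : ℚ) = pr ((a:ℚ)+1) k := by
  have h := Nat.ascFactorial_eq_factorial_mul_choose a k
  have h2 : ((a+1).ascFactorial k : ℚ) = pr ((a:ℚ)+1) k := by
    rw [asc_eq_prod]
    push_cast
    rfl
  rw [← h2, h]
  push_cast
  ring

lemma chooseL (n p : ℕ) :
    (((n+p).choose (5*p) : ℚ)) * ((5*p).factorial : ℚ) = pr ((n:ℚ) - 4*p + 1) (5*p) := by
  rcases le_or_gt (4*p) n with h | h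
  · obtain ⟨a, rfl⟩ : ∃ a, n = a + 4*p := ⟨n - 4*p, by omega⟩
    have := choose_cast_prod a (5*p)
    have e1 : a + 4*p + p = a + 5*p := by ring
    have e2 : ((a + 4*p : ℕ):ℚ) - 4*p + 1 = (a:ℚ) + 1 := by push_cast; ring
    rw [e1, e2, this]
  · have h1 : (n+p).choose (5*p) = 0 := Nat.choose_eq_zero_of_lt (by omega)
    have h2 : pr ((n:ℚ) - 4*p + 1) (5*p) = 0 := by
      apply pr_eq_zero _ _ (4*p - (n+1)) (by omega)
      have : ((4*p - (n+1) : ℕ) : ℚ) = 4*(p:ℚ) - 1 - n := by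
        push_cast [Nat.cast_sub (by omega : n + 1 ≤ 4*p)]
        ring
      rw [this]; ring
    rw [h1, h2]; simp

lemma chooseR (n p : ℕ) (hp : p ≤ n) :
    (((2*n-2*p).choose n : ℚ)) * (n.factorial : ℚ) = pr ((n:ℚ) - 2*p + 1) n := by
  rcases le_or_gt (2*p) n with h | h
  · obtain ⟨a, ha⟩ : ∃ a, n = a + 2*p := ⟨n - 2*p, by omega⟩
    have h1 : 2*n - 2*p = a + n := by omega
    have := choose_cast_prod a n
    have e2 : (n:ℚ) - 2*p + 1 = (a:ℚ) + 1 := by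
      subst ha; push_cast; ring
    rw [h1, e2, this]
  · have h1 : (2*n-2*p).choose n = 0 := Nat.choose_eq_zero_of_lt (by omega)
    have h2 : pr ((n:ℚ) - 2*p + 1) n = 0 := by
      apply pr_eq_zero _ _ (2*p - (n+1)) (by omega)
      have : ((2*p - (n+1) : ℕ) : ℚ) = 2*(p:ℚ) - 1 - n := by
        push_cast [Nat.cast_sub (by omega : n + 1 ≤ 2*p)]
        ring
      rw [this]; ring
    rw [h1, h2]; simp

/-- C(a+b+1, a+1)(a+1) = C(a+b, a)(a+b+1) -/
lemma step_choose (a b : ℕ) :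
    (((a+b+1).choose (a+1) : ℚ)) * ((a:ℚ)+1) = (((a+b).choose a : ℚ)) * ((a:ℚ)+b+1) := by
  have := Nat.add_one_mul_choose_eq (a+b) a
  have h2 : ((Nat.succ (a+b) * (a+b).choose a : ℕ) : ℚ)
      = (((a+b+1).choose (a+1) * (a+1) : ℕ) : ℚ) := by
    rw [this]
  push_cast at h2
  linear_combination -h2

lemma pr_one (x : ℚ) : pr x 1 = x := by
  rw [show (1:ℕ) = 0+1 from rfl, pr_succ, pr_zero]; norm_num

lemma pr_two (x : ℚ) : pr x 2 = x*(x+1) := by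
  rw [show (2:ℕ) = 1+1 from rfl, pr_succ, pr_one]; norm_num

lemma pr_three (x : ℚ) : pr x 3 = x*(x+1)*(x+2) := by
  rw [show (3:ℕ) = 2+1 from rfl, pr_succ, pr_two]; norm_num

lemma pr_four (x : ℚ) : pr x 4 = x*(x+1)*(x+2)*(x+3) := by
  rw [show (4:ℕ) = 3+1 from rfl, pr_succ, pr_three]; norm_num

lemma fact_cast_succ (k : ℕ) : (((k+1).factorial : ℕ) : ℚ) = ((k:ℚ)+1) * (k.factorial : ℚ) := by
  rw [Nat.factorial_succ]; push_cast; ring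

lemma fact5 (k : ℕ) : (((k+5).factorial : ℕ) : ℚ)
    = ((k:ℚ)+1)*((k:ℚ)+2)*((k:ℚ)+3)*((k:ℚ)+4)*((k:ℚ)+5) * (k.factorial : ℚ) := by
  rw [show k+5 = (k+4)+1 from rfl, fact_cast_succ,
      show k+4 = (k+3)+1 from rfl, fact_cast_succ,
      show k+3 = (k+2)+1 from rfl, fact_cast_succ,
      show k+2 = (k+1)+1 from rfl, fact_cast_succ, fact_cast_succ]
  push_cast; ring

lemma fact_ne (k : ℕ) : ((k.factorial : ℕ) : ℚ) ≠ 0 := by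
  exact_mod_cast Nat.factorial_ne_zero k

/-- choose ratio for the 5-Catalan kernel -/
lemma chooseC (p : ℕ) :
    ((5*p+5).choose (p+1) : ℚ) * (((p:ℚ)+1)*(4*(p:ℚ)+1)*(4*(p:ℚ)+2)*(4*(p:ℚ)+3)*(4*(p:ℚ)+4))
    = ((5*p).choose p : ℚ) * ((5*(p:ℚ)+1)*(5*(p:ℚ)+2)*(5*(p:ℚ)+3)*(5*(p:ℚ)+4)*(5*(p:ℚ)+5)) := by
  have h1 := Nat.cast_choose ℚ (show p+1 ≤ 5*p+5 by omega)
  have h2 := Nat.cast_choose ℚ (show p ≤ 5*p by omega)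
  rw [show 5*p+5 - (p+1) = (4*p)+4 by omega] at h1
  rw [show 5*p - p = 4*p by omega] at h2
  have e5 : (((5*p+5).factorial : ℕ) : ℚ)
      = ((5*(p:ℚ))+1)*((5*(p:ℚ))+2)*((5*(p:ℚ))+3)*((5*(p:ℚ))+4)*((5*(p:ℚ))+5) * ((5*p).factorial : ℚ) := by
    rw [fact5]; push_cast; ring
  have e4 : (((4*p+4).factorial : ℕ) : ℚ)
      = ((4*(p:ℚ))+1)*((4*(p:ℚ))+2)*((4*(p:ℚ))+3)*((4*(p:ℚ))+4) * ((4*p).factorial : ℚ) := by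
    rw [show 4*p+4 = (4*p+3)+1 from rfl, fact_cast_succ,
        show 4*p+3 = (4*p+2)+1 from rfl, fact_cast_succ,
        show 4*p+2 = (4*p+1)+1 from rfl, fact_cast_succ, fact_cast_succ]
    push_cast; ring
  have ep : (((p+1).factorial : ℕ) : ℚ) = ((p:ℚ)+1)*(p.factorial : ℚ) := fact_cast_succ p
  rw [h1, h2, e5, e4, ep]
  have n1 := fact_ne p
  have n2 := fact_ne (4*p)
  have n3 := fact_ne (5*p)
  have n4 : (p:ℚ)+1 ≠ 0 := by positivity
  have n5 : 4*(p:ℚ)+1 ≠ 0 := by positivity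
  have n6 : 4*(p:ℚ)+2 ≠ 0 := by positivity
  have n7 : 4*(p:ℚ)+3 ≠ 0 := by positivity
  have n8 : 4*(p:ℚ)+4 ≠ 0 := by positivity
  field_simp

def c0q (x : ℚ) : ℚ := -3960 - 12888*x - 14896*x^2 - 7296*x^3 - 1280*x^4
def c1q (x : ℚ) : ℚ := 9720 + 22650*x + 19451*x^2 + 7308*x^3 + 1015*x^4
def c2q (x : ℚ) : ℚ := -8064 - 16488*x - 12124*x^2 - 3828*x^3 - 440*x^4
def c3q (x : ℚ) : ℚ := 2304 + 4416*x + 2944*x^2 + 816*x^3 + 80*x^4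

def FL (n p : ℕ) : ℚ := ((1:ℚ)/(4*p+1)) * ((5*p).choose p : ℚ) * ((n+p).choose (5*p) : ℚ)

def GLq (n p : ℕ) : ℚ := (-40) * (p:ℚ)^2 * (2*(p:ℚ)-1) * (4*(p:ℚ)-1)
    * (5*(n:ℚ)+6)*(5*(n:ℚ)+7)*(5*(n:ℚ)+11)
    * ((5*p).choose p : ℚ) * pr ((n:ℚ) - 4*(p:ℚ) + 4) (5*p-3)
    / (((n:ℚ)+1) * ((5*p).factorial : ℚ))

lemma E0 (n q : ℕ) : ((n+(q+1)).choose (5*q+5) : ℚ) * ((5*q+5).factorial : ℚ)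
    = (((n:ℚ)-4*q-3)*((n:ℚ)-4*q-2)*((n:ℚ)-4*q-1)) * pr ((n:ℚ)-4*q) (5*q+2) := by
  have h := chooseL n (q+1)
  rw [show 5*(q+1) = 5*q+5 by ring] at h
  rw [h, show (((n:ℕ):ℚ) - 4*((q+1:ℕ):ℚ) + 1) = ((n:ℚ)-4*(q:ℚ)-3) by push_cast; ring,
     show (5*q+5 : ℕ) = 3+(5*q+2) by ring, pr_add, pr_three,
     show ((n:ℚ)-4*(q:ℚ)-3+((3:ℕ):ℚ)) = (n:ℚ)-4*(q:ℚ) by push_cast; ring]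
  ring

lemma E1 (n q : ℕ) : ((n+1+(q+1)).choose (5*q+5) : ℚ) * ((5*q+5).factorial : ℚ)
    = (((n:ℚ)-4*q-2)*((n:ℚ)-4*q-1)) * pr ((n:ℚ)-4*q) (5*q+2) * ((n:ℚ)+q+2) := by
  have h := chooseL (n+1) (q+1)
  rw [show 5*(q+1) = 5*q+5 by ring] at h
  rw [h, show (((n+1:ℕ):ℚ) - 4*((q+1:ℕ):ℚ) + 1) = ((n:ℚ)-4*(q:ℚ)-2) by push_cast; ring,
     show (5*q+5 : ℕ) = 2+(5*q+3) by ring, pr_add]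
  rw [show ((n:ℚ)-4*(q:ℚ)-2+((2:ℕ):ℚ)) = (n:ℚ)-4*(q:ℚ) by push_cast; ring,
     show (5*q+3 : ℕ) = (5*q+2)+1 by ring, pr_succ ((n:ℚ)-4*(q:ℚ)) (5*q+2),
     pr_two ((n:ℚ)-4*(q:ℚ)-2)]
  push_cast; ring

lemma E2 (n q : ℕ) : ((n+2+(q+1)).choose (5*q+5) : ℚ) * ((5*q+5).factorial : ℚ)
    = ((n:ℚ)-4*q-1) * pr ((n:ℚ)-4*q) (5*q+2) * (((n:ℚ)+q+2)*((n:ℚ)+q+3)) := by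
  have h := chooseL (n+2) (q+1)
  rw [show 5*(q+1) = 5*q+5 by ring] at h
  rw [h, show (((n+2:ℕ):ℚ) - 4*((q+1:ℕ):ℚ) + 1) = ((n:ℚ)-4*(q:ℚ)-1) by push_cast; ring,
     show (5*q+5 : ℕ) = 1+((5*q+2)+2) by ring, pr_add, pr_add,
     show ((n:ℚ)-4*(q:ℚ)-1+((1:ℕ):ℚ)) = (n:ℚ)-4*(q:ℚ) by push_cast; ring, pr_one, pr_two]
  push_cast; ring

lemma E3 (n q : ℕ) : ((n+3+(q+1)).choose (5*q+5) : ℚ) * ((5*q+5).factorial : ℚ)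
    = pr ((n:ℚ)-4*q) (5*q+2) * (((n:ℚ)+q+2)*((n:ℚ)+q+3)*((n:ℚ)+q+4)) := by
  have h := chooseL (n+3) (q+1)
  rw [show 5*(q+1) = 5*q+5 by ring] at h
  rw [h, show (((n+3:ℕ):ℚ) - 4*((q+1:ℕ):ℚ) + 1) = ((n:ℚ)-4*(q:ℚ)) by push_cast; ring,
     show (5*q+5 : ℕ) = (5*q+2)+3 by ring, pr_add, pr_three]
  push_cast; ring

lemma EK2 (n q : ℕ) : pr ((n:ℚ)-4*(q:ℚ)-4) (5*q+7)
    = (((n:ℚ)-4*q-4)*((n:ℚ)-4*q-3)*((n:ℚ)-4*q-2)*((n:ℚ)-4*q-1))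
      * pr ((n:ℚ)-4*q) (5*q+2) * ((n:ℚ)+q+2) := by
  rw [show (5*q+7 : ℕ) = 4+((5*q+2)+1) by ring, pr_add]
  rw [show ((n:ℚ)-4*(q:ℚ)-4+((4:ℕ):ℚ)) = (n:ℚ)-4*(q:ℚ) by push_cast; ring,
     pr_succ ((n:ℚ)-4*(q:ℚ)) (5*q+2), pr_four ((n:ℚ)-4*(q:ℚ)-4)]
  push_cast; ring

lemma certL1 (n q : ℕ) :
    c0q n * FL n (q+1) + c1q n * FL (n+1) (q+1) + c2q n * FL (n+2) (q+1) + c3q n * FL (n+3) (q+1)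
    = GLq n (q+2) - GLq n (q+1) := by
  have hF5 := fact_ne (5*q+5)
  simp only [GLq, FL]
  rw [show (5*(q+1)-3 : ℕ) = 5*q+2 by omega, show (5*(q+2)-3 : ℕ) = 5*q+7 by omega,
      show (5*(q+1) : ℕ) = 5*q+5 by ring, show (5*(q+2) : ℕ) = 5*q+10 by ring]
  rw [show ((n:ℚ) - 4*((q+1:ℕ):ℚ) + 4) = (n:ℚ)-4*(q:ℚ) by push_cast; ring,
      show ((n:ℚ) - 4*((q+2:ℕ):ℚ) + 4) = (n:ℚ)-4*(q:ℚ)-4 by push_cast; ring,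
      EK2 n q]
  have E0' : ((n+(q+1)).choose (5*q+5) : ℚ)
      = (((n:ℚ)-4*q-3)*((n:ℚ)-4*q-2)*((n:ℚ)-4*q-1)) * pr ((n:ℚ)-4*q) (5*q+2)
        / ((5*q+5).factorial : ℚ) := by
    rw [eq_div_iff hF5]; exact E0 n q
  have E1' : ((n+1+(q+1)).choose (5*q+5) : ℚ)
      = (((n:ℚ)-4*q-2)*((n:ℚ)-4*q-1)) * pr ((n:ℚ)-4*q) (5*q+2) * ((n:ℚ)+q+2)
        / ((5*q+5).factorial : ℚ) := by
    rw [eq_div_iff hF5]; exact E1 n q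
  have E2' : ((n+2+(q+1)).choose (5*q+5) : ℚ)
      = ((n:ℚ)-4*q-1) * pr ((n:ℚ)-4*q) (5*q+2) * (((n:ℚ)+q+2)*((n:ℚ)+q+3))
        / ((5*q+5).factorial : ℚ) := by
    rw [eq_div_iff hF5]; exact E2 n q
  have E3' : ((n+3+(q+1)).choose (5*q+5) : ℚ)
      = pr ((n:ℚ)-4*q) (5*q+2) * (((n:ℚ)+q+2)*((n:ℚ)+q+3)*((n:ℚ)+q+4))
        / ((5*q+5).factorial : ℚ) := by
    rw [eq_div_iff hF5]; exact E3 n q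
  have hCC : ((5*q+10).choose (q+2) : ℚ)
      = ((5*q+5).choose (q+1) : ℚ) * ((5*(q:ℚ)+6)*(5*(q:ℚ)+7)*(5*(q:ℚ)+8)*(5*(q:ℚ)+9)*(5*(q:ℚ)+10))
        / (((q:ℚ)+2)*(4*(q:ℚ)+5)*(4*(q:ℚ)+6)*(4*(q:ℚ)+7)*(4*(q:ℚ)+8)) := by
    have h := chooseC (q+1)
    rw [show 5*(q+1)+5 = 5*q+10 by ring, show (q+1)+1 = q+2 from rfl,
        show 5*(q+1) = 5*q+5 by ring] at h
    push_cast at h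
    rw [eq_div_iff (by positivity)]
    linear_combination h
  have hF10 : ((5*q+10).factorial : ℚ)
      = (5*(q:ℚ)+6)*(5*(q:ℚ)+7)*(5*(q:ℚ)+8)*(5*(q:ℚ)+9)*(5*(q:ℚ)+10) * ((5*q+5).factorial : ℚ) := by
    rw [show (5*q+10 : ℕ) = (5*q+5)+5 by ring, fact5]; push_cast; ring
  rw [E0', E1', E2', E3', hCC, hF10]
  have h1 : ((n:ℚ)+1) ≠ 0 := by positivity
  have h2 : (4*((q+1:ℕ):ℚ)+1) ≠ 0 := by push_cast; positivity
  have h3 : ((q:ℚ)+2) ≠ 0 := by positivity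
  have h4 : (4*(q:ℚ)+5) ≠ 0 := by positivity
  have h5 : (4*(q:ℚ)+6) ≠ 0 := by positivity
  have h6 : (4*(q:ℚ)+7) ≠ 0 := by positivity
  have h7 : (4*(q:ℚ)+8) ≠ 0 := by positivity
  simp only [c0q, c1q, c2q, c3q]
  push_cast
  field_simp
  ring

lemma certL0 (n : ℕ) :
    c0q n * FL n 0 + c1q n * FL (n+1) 0 + c2q n * FL (n+2) 0 + c3q n * FL (n+3) 0
    = GLq n 1 - GLq n 0 := by
  have h1 : ((n:ℚ)+1) ≠ 0 := by positivity
  simp only [FL, GLq, c0q, c1q, c2q, c3q]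
  norm_num [Nat.choose, pr_zero]
  rw [pr_two]
  norm_num [Nat.factorial]
  field_simp
  ring

lemma glq_zero (n : ℕ) : GLq n 0 = 0 := by simp [GLq]

lemma glq_top (n : ℕ) : GLq n (n+1) = 0 := by
  have h : pr ((n:ℚ) - 4*((n+1:ℕ):ℚ) + 4) (5*(n+1)-3) = 0 := by
    apply pr_eq_zero _ _ (3*n) (by omega)
    push_cast; ring
  unfold GLq
  rw [h]
  simp

lemma sumFL (n : ℕ) :
    ∑ p ∈ Finset.range (n+1),
      (c0q n * FL n p + c1q n * FL (n+1) p + c2q n * FL (n+2) p + c3q n * FL (n+3) p) = 0 := by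
  have tele : ∀ p, (c0q n * FL n p + c1q n * FL (n+1) p + c2q n * FL (n+2) p + c3q n * FL (n+3) p)
      = GLq n (p+1) - GLq n p := by
    intro p
    cases p with
    | zero => exact certL0 n
    | succ q => exact certL1 n q
  calc ∑ p ∈ Finset.range (n+1), (c0q n * FL n p + c1q n * FL (n+1) p + c2q n * FL (n+2) p + c3q n * FL (n+3) p)
      = ∑ p ∈ Finset.range (n+1), (GLq n (p+1) - GLq n p) :=
        Finset.sum_congr rfl (fun p _ => tele p)
    _ = GLq n (n+1) - GLq n 0 := Finset.sum_range_sub (GLq n) (n+1)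
    _ = 0 := by rw [glq_top, glq_zero]; ring

def SL (j : ℕ) : ℚ := ∑ p ∈ Finset.range (j/4+1), FL j p

lemma extendL (j N : ℕ) (h : j/4+1 ≤ N) :
    ∑ p ∈ Finset.range N, FL j p = SL j := by
  unfold SL
  symm
  apply Finset.sum_subset (Finset.range_subset_range.2 h)
  intro p hp hnp
  simp only [Finset.mem_range, not_lt] at hp hnp
  have : j + p < 5*p := by omega
  simp [FL, Nat.choose_eq_zero_of_lt this]

lemma recL (n : ℕ) :
    c0q n * SL n + c1q n * SL (n+1) + c2q n * SL (n+2) + c3q n * SL (n+3) = 0 := by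
  rw [← extendL n (n+1) (by omega), ← extendL (n+1) (n+1) (by omega),
      ← extendL (n+2) (n+1) (by omega), ← extendL (n+3) (n+1) (by omega),
      Finset.mul_sum, Finset.mul_sum, Finset.mul_sum, Finset.mul_sum,
      ← Finset.sum_add_distrib, ← Finset.sum_add_distrib, ← Finset.sum_add_distrib]
  exact sumFL n
def Wq (n p : ℚ) : ℚ := (-88560) + (85968)*p^1 + (-11040)*p^2 + (16704)*p^3 + (-24576)*p^4 + (9216)*p^5 + (-1536)*p^6 + (-351576)*n^1 + (257784)*n^1*p^1 + (1336)*n^1*p^2 + (10176)*n^1*p^3 + (-33248)*n^1*p^4 + (10752)*n^1*p^5 + (-1280)*n^1*p^6 + (-602088)*n^2 + (319436)*n^2*p^1 + (30488)*n^2*p^2 + (-13728)*n^2*p^3 + (-11840)*n^2*p^4 + (2560)*n^2*p^5 + (-575588)*n^3 + (210804)*n^3*p^1 + (28048)*n^3*p^2 + (-12160)*n^3*p^3 + (-800)*n^3*p^4 + (-330572)*n^4 + (78740)*n^4*p^1 + (9240)*n^4*p^2 + (-2400)*n^4*p^3 + (-113532)*n^5 + (15892)*n^5*p^1 + (1000)*n^5*p^2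 + (-21484)*n^6 + (1360)*n^6*p^1 + (-1720)*n^7

def FR (n p : ℕ) : ℚ :=
  (-1 : ℚ) ^ p * ((1 : ℚ) / (n + 1)) * (Nat.choose (n + p) n) * (Nat.choose (2 * n - 2 * p) n)

def GRq (n p : ℕ) : ℚ :=
  (p:ℚ) * ((n:ℚ)-(p:ℚ)+1) * (2*(n:ℚ)-2*(p:ℚ)+1) * Wq (n:ℚ) (p:ℚ) * (-1:ℚ)^p
    * ((n+p).choose n : ℚ) * pr ((n:ℚ) - 2*(p:ℚ) + 4) (n-3)
    / (((n:ℚ)+1)^2 * ((n:ℚ)+2) * ((n:ℚ)+3) * (n.factorial : ℚ))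

/-- p-shift of the central binomial-ish coefficient -/
lemma stepP (n p : ℕ) : ((n+(p+1)).choose n : ℚ) * ((p:ℚ)+1) = ((n+p).choose n : ℚ) * ((n:ℚ)+p+1) := by
  have h1 : (n+(p+1)).choose n = (n+p+1).choose (p+1) := by
    rw [show n+(p+1) = n+p+1 by ring, Nat.choose_symm_of_eq_add (show n+p+1 = n+(p+1) by ring)]
  have h2 : (n+p).choose n = (n+p).choose p := Nat.choose_symm_of_eq_add rfl
  rw [h1, h2]
  have := Nat.add_one_mul_choose_eq (n+p) p
  have h3 : (((n+p).succ * (n+p).choose p : ℕ) : ℚ) = (((n+p+1).choose (p+1) * (p+1) : ℕ) : ℚ) := by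
    rw [this]
  push_cast at h3
  linear_combination -h3

lemma stepN (n p : ℕ) : ((n+1+p).choose (n+1) : ℚ) * ((n:ℚ)+1) = ((n+p).choose n : ℚ) * ((n:ℚ)+p+1) := by
  have h := step_choose n p
  rw [show n+1+p = n+p+1 by ring]
  push_cast at h ⊢
  linear_combination h

lemma ER0 (m p : ℕ) (hp : p ≤ m+7) :
    ((2*(m+7)-2*p).choose (m+7) : ℚ) * ((m+7).factorial : ℚ)
    = ((m:ℚ)-2*p+8)*((m:ℚ)-2*p+9)*((m:ℚ)-2*p+10) * pr ((m:ℚ)-2*(p:ℚ)+11) m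
      * ((2*(m:ℚ)-2*p+11)*(2*(m:ℚ)-2*p+12)*(2*(m:ℚ)-2*p+13)*(2*(m:ℚ)-2*p+14)) := by
  have h := chooseR (m+7) p hp
  rw [h, show (((m+7:ℕ):ℚ) - 2*(p:ℚ) + 1) = ((m:ℚ)-2*(p:ℚ)+8) by push_cast; ring,
      show (m+7:ℕ) = 3+(m+4) by ring, pr_add, pr_add,
      show ((m:ℚ)-2*(p:ℚ)+8+((3:ℕ):ℚ)) = (m:ℚ)-2*(p:ℚ)+11 by push_cast; ring]
  simp only [pr_one, pr_two, pr_three, pr_four]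
  push_cast; ring

lemma ER1 (m p : ℕ) (hp : p ≤ m+8) :
    ((2*(m+8)-2*p).choose (m+8) : ℚ) * ((m+8).factorial : ℚ)
    = ((m:ℚ)-2*p+9)*((m:ℚ)-2*p+10) * pr ((m:ℚ)-2*(p:ℚ)+11) m
      * ((2*(m:ℚ)-2*p+11)*(2*(m:ℚ)-2*p+12)*(2*(m:ℚ)-2*p+13)*(2*(m:ℚ)-2*p+14)
         *(2*(m:ℚ)-2*p+15)*(2*(m:ℚ)-2*p+16)) := by
  have h := chooseR (m+8) p hp
  rw [h, show (((m+8:ℕ):ℚ) - 2*(p:ℚ) + 1) = ((m:ℚ)-2*(p:ℚ)+9) by push_cast; ring,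
      show (m+8:ℕ) = 2+(m+6) by ring, pr_add, pr_add,
      show ((m:ℚ)-2*(p:ℚ)+9+((2:ℕ):ℚ)) = (m:ℚ)-2*(p:ℚ)+11 by push_cast; ring,
      show (6:ℕ) = 4+2 by norm_num, pr_add]
  simp only [pr_one, pr_two, pr_three, pr_four]
  push_cast; ring

lemma ER2 (m p : ℕ) (hp : p ≤ m+9) :
    ((2*(m+9)-2*p).choose (m+9) : ℚ) * ((m+9).factorial : ℚ)
    = ((m:ℚ)-2*p+10) * pr ((m:ℚ)-2*(p:ℚ)+11) m
      * ((2*(m:ℚ)-2*p+11)*(2*(m:ℚ)-2*p+12)*(2*(m:ℚ)-2*p+13)*(2*(m:ℚ)-2*p+14)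
         *(2*(m:ℚ)-2*p+15)*(2*(m:ℚ)-2*p+16)*(2*(m:ℚ)-2*p+17)*(2*(m:ℚ)-2*p+18)) := by
  have h := chooseR (m+9) p hp
  rw [h, show (((m+9:ℕ):ℚ) - 2*(p:ℚ) + 1) = ((m:ℚ)-2*(p:ℚ)+10) by push_cast; ring,
      show (m+9:ℕ) = 1+(m+8) by ring, pr_add, pr_add,
      show ((m:ℚ)-2*(p:ℚ)+10+((1:ℕ):ℚ)) = (m:ℚ)-2*(p:ℚ)+11 by push_cast; ring,
      show (8:ℕ) = 4+4 by norm_num, pr_add]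
  simp only [pr_one, pr_two, pr_three, pr_four]
  push_cast; ring

lemma ER3 (m p : ℕ) (hp : p ≤ m+10) :
    ((2*(m+10)-2*p).choose (m+10) : ℚ) * ((m+10).factorial : ℚ)
    = pr ((m:ℚ)-2*(p:ℚ)+11) m
      * ((2*(m:ℚ)-2*p+11)*(2*(m:ℚ)-2*p+12)*(2*(m:ℚ)-2*p+13)*(2*(m:ℚ)-2*p+14)
         *(2*(m:ℚ)-2*p+15)*(2*(m:ℚ)-2*p+16)*(2*(m:ℚ)-2*p+17)*(2*(m:ℚ)-2*p+18)
         *(2*(m:ℚ)-2*p+19)*(2*(m:ℚ)-2*p+20)) := by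
  have h := chooseR (m+10) p hp
  rw [h, show (((m+10:ℕ):ℚ) - 2*(p:ℚ) + 1) = ((m:ℚ)-2*(p:ℚ)+11) by push_cast; ring,
      show (m+10:ℕ) = m+10 from rfl, pr_add,
      show (10:ℕ) = 4+(4+2) by norm_num, pr_add, pr_add]
  simp only [pr_one, pr_two, pr_three, pr_four]
  push_cast; ring

lemma ERG0 (m p : ℕ) :
    pr (((m+7:ℕ):ℚ) - 2*(p:ℚ) + 4) (m+7-3)
    = pr ((m:ℚ)-2*(p:ℚ)+11) m
      * ((2*(m:ℚ)-2*p+11)*(2*(m:ℚ)-2*p+12)*(2*(m:ℚ)-2*p+13)*(2*(m:ℚ)-2*p+14)) := by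
  rw [show (((m+7:ℕ):ℚ) - 2*(p:ℚ) + 4) = ((m:ℚ)-2*(p:ℚ)+11) by push_cast; ring,
      show (m+7-3:ℕ) = m+4 by omega, pr_add]
  simp only [pr_four]
  push_cast; ring

lemma ERG1 (m p : ℕ) :
    pr (((m+7:ℕ):ℚ) - 2*((p+1:ℕ):ℚ) + 4) (m+7-3)
    = ((m:ℚ)-2*p+9)*((m:ℚ)-2*p+10) * pr ((m:ℚ)-2*(p:ℚ)+11) m
      * ((2*(m:ℚ)-2*p+11)*(2*(m:ℚ)-2*p+12)) := by
  rw [show (((m+7:ℕ):ℚ) - 2*((p+1:ℕ):ℚ) + 4) = ((m:ℚ)-2*(p:ℚ)+9) by push_cast; ring,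
      show (m+7-3:ℕ) = 2+(m+2) by omega, pr_add, pr_add,
      show ((m:ℚ)-2*(p:ℚ)+9+((2:ℕ):ℚ)) = (m:ℚ)-2*(p:ℚ)+11 by push_cast; ring]
  simp only [pr_one, pr_two]
  push_cast; ring

set_option maxHeartbeats 4000000 in
lemma certR (m p : ℕ) (hp : p ≤ m+7) :
    c0q ((m+7:ℕ):ℚ) * FR (m+7) p + c1q ((m+7:ℕ):ℚ) * FR (m+8) p
      + c2q ((m+7:ℕ):ℚ) * FR (m+9) p + c3q ((m+7:ℕ):ℚ) * FR (m+10) p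
    = GRq (m+7) (p+1) - GRq (m+7) p := by
  have hf7 := fact_ne (m+7)
  have f8 : ((m+8).factorial : ℚ) = ((m:ℚ)+8)*((m+7).factorial : ℚ) := by
    rw [show (m+8:ℕ) = (m+7)+1 by ring, fact_cast_succ]; push_cast; ring
  have f9 : ((m+9).factorial : ℚ) = ((m:ℚ)+9)*((m:ℚ)+8)*((m+7).factorial : ℚ) := by
    rw [show (m+9:ℕ) = (m+8)+1 by ring, fact_cast_succ, f8]; push_cast; ring
  have f10 : ((m+10).factorial : ℚ) = ((m:ℚ)+10)*((m:ℚ)+9)*((m:ℚ)+8)*((m+7).factorial : ℚ) := by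
    rw [show (m+10:ℕ) = (m+9)+1 by ring, fact_cast_succ, f9]; push_cast; ring
  have sN1 : ((m+8+p).choose (m+8) : ℚ) = ((m+7+p).choose (m+7):ℚ) * ((m:ℚ)+p+8)/((m:ℚ)+8) := by
    have h := stepN (m+7) p
    rw [show m+7+1 = m+8 by ring] at h
    push_cast at h
    rw [eq_div_iff (by positivity)]
    linear_combination h
  have sN2 : ((m+9+p).choose (m+9) : ℚ) = ((m+8+p).choose (m+8):ℚ) * ((m:ℚ)+p+9)/((m:ℚ)+9) := by
    have h := stepN (m+8) p
    rw [show m+8+1 = m+9 by ring] at h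
    push_cast at h
    rw [eq_div_iff (by positivity)]
    linear_combination h
  have sN3 : ((m+10+p).choose (m+10) : ℚ) = ((m+9+p).choose (m+9):ℚ) * ((m:ℚ)+p+10)/((m:ℚ)+10) := by
    have h := stepN (m+9) p
    rw [show m+9+1 = m+10 by ring] at h
    push_cast at h
    rw [eq_div_iff (by positivity)]
    linear_combination h
  have sP : ((m+7+(p+1)).choose (m+7) : ℚ)
      = ((m+7+p).choose (m+7):ℚ) * ((m:ℚ)+p+8)/((p:ℚ)+1) := by
    have h := stepP (m+7) p
    push_cast at h
    rw [eq_div_iff (by positivity)]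
    linear_combination h
  have E0' : ((2*(m+7)-2*p).choose (m+7) : ℚ)
      = (((m:ℚ)-2*p+8)*((m:ℚ)-2*p+9)*((m:ℚ)-2*p+10) * pr ((m:ℚ)-2*(p:ℚ)+11) m
        * ((2*(m:ℚ)-2*p+11)*(2*(m:ℚ)-2*p+12)*(2*(m:ℚ)-2*p+13)*(2*(m:ℚ)-2*p+14)))
        / ((m+7).factorial : ℚ) := by
    rw [eq_div_iff hf7]; exact ER0 m p hp
  have E1' : ((2*(m+8)-2*p).choose (m+8) : ℚ)
      = (((m:ℚ)-2*p+9)*((m:ℚ)-2*p+10) * pr ((m:ℚ)-2*(p:ℚ)+11) m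
        * ((2*(m:ℚ)-2*p+11)*(2*(m:ℚ)-2*p+12)*(2*(m:ℚ)-2*p+13)*(2*(m:ℚ)-2*p+14)
           *(2*(m:ℚ)-2*p+15)*(2*(m:ℚ)-2*p+16)))
        / (((m:ℚ)+8)*((m+7).factorial : ℚ)) := by
    rw [eq_div_iff (by positivity)]
    rw [show (((m:ℚ)+8)*((m+7).factorial : ℚ)) = ((m+8).factorial : ℚ) by rw [f8]]
    exact ER1 m p (by omega)
  have E2' : ((2*(m+9)-2*p).choose (m+9) : ℚ)
      = (((m:ℚ)-2*p+10) * pr ((m:ℚ)-2*(p:ℚ)+11) m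
        * ((2*(m:ℚ)-2*p+11)*(2*(m:ℚ)-2*p+12)*(2*(m:ℚ)-2*p+13)*(2*(m:ℚ)-2*p+14)
           *(2*(m:ℚ)-2*p+15)*(2*(m:ℚ)-2*p+16)*(2*(m:ℚ)-2*p+17)*(2*(m:ℚ)-2*p+18)))
        / (((m:ℚ)+9)*((m:ℚ)+8)*((m+7).factorial : ℚ)) := by
    rw [eq_div_iff (by positivity)]
    rw [show (((m:ℚ)+9)*((m:ℚ)+8)*((m+7).factorial : ℚ)) = ((m+9).factorial : ℚ) by
      rw [f9]]
    exact ER2 m p (by omega)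
  have E3' : ((2*(m+10)-2*p).choose (m+10) : ℚ)
      = (pr ((m:ℚ)-2*(p:ℚ)+11) m
        * ((2*(m:ℚ)-2*p+11)*(2*(m:ℚ)-2*p+12)*(2*(m:ℚ)-2*p+13)*(2*(m:ℚ)-2*p+14)
           *(2*(m:ℚ)-2*p+15)*(2*(m:ℚ)-2*p+16)*(2*(m:ℚ)-2*p+17)*(2*(m:ℚ)-2*p+18)
           *(2*(m:ℚ)-2*p+19)*(2*(m:ℚ)-2*p+20)))
        / (((m:ℚ)+10)*((m:ℚ)+9)*((m:ℚ)+8)*((m+7).factorial : ℚ)) := by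
    rw [eq_div_iff (by positivity)]
    rw [show (((m:ℚ)+10)*((m:ℚ)+9)*((m:ℚ)+8)*((m+7).factorial : ℚ)) = ((m+10).factorial : ℚ) by
      rw [f10]]
    exact ER3 m p (by omega)
  simp only [FR, GRq]
  rw [ERG1 m p, ERG0 m p, sN3, sN2, sN1, sP, E0', E1', E2', E3', pow_succ]
  simp only [c0q, c1q, c2q, c3q, Wq]
  have h1 : ((m:ℚ)+8) ≠ 0 := by positivity
  have h2 : ((m:ℚ)+9) ≠ 0 := by positivity
  have h3 : ((m:ℚ)+10) ≠ 0 := by positivity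
  have h4 : ((p:ℚ)+1) ≠ 0 := by positivity
  push_cast
  field_simp
  ring

lemma grq_zero (n : ℕ) : GRq n 0 = 0 := by simp [GRq]

lemma grq_top (m : ℕ) : GRq (m+7) (m+8) = 0 := by
  unfold GRq
  rw [show (((m+7:ℕ):ℚ) - ((m+8:ℕ):ℚ) + 1) = 0 by push_cast; ring]
  simp

lemma sumFR (m : ℕ) :
    ∑ p ∈ Finset.range (m+8),
      (c0q ((m+7:ℕ):ℚ) * FR (m+7) p + c1q ((m+7:ℕ):ℚ) * FR (m+8) p
        + c2q ((m+7:ℕ):ℚ) * FR (m+9) p + c3q ((m+7:ℕ):ℚ) * FR (m+10) p) = 0 := by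
  have tele : ∀ p ∈ Finset.range (m+8),
      (c0q ((m+7:ℕ):ℚ) * FR (m+7) p + c1q ((m+7:ℕ):ℚ) * FR (m+8) p
        + c2q ((m+7:ℕ):ℚ) * FR (m+9) p + c3q ((m+7:ℕ):ℚ) * FR (m+10) p)
      = GRq (m+7) (p+1) - GRq (m+7) p := by
    intro p hp
    simp only [Finset.mem_range] at hp
    exact certR m p (by omega)
  rw [Finset.sum_congr rfl tele, Finset.sum_range_sub (GRq (m+7)) (m+8), grq_top, grq_zero]
  ring

def SR (j : ℕ) : ℚ := ∑ p ∈ Finset.range (j/2+1), FR j p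

lemma extendR (j N : ℕ) (h1 : j/2+1 ≤ N) (h2 : N ≤ j+1) :
    ∑ p ∈ Finset.range N, FR j p = SR j := by
  unfold SR
  symm
  apply Finset.sum_subset (Finset.range_subset_range.2 h1)
  intro p hp hnp
  simp only [Finset.mem_range, not_lt] at hp hnp
  have : 2*j - 2*p < j := by omega
  simp [FR, Nat.choose_eq_zero_of_lt this]

lemma recR (m : ℕ) :
    c0q ((m+7:ℕ):ℚ) * SR (m+7) + c1q ((m+7:ℕ):ℚ) * SR (m+8)
      + c2q ((m+7:ℕ):ℚ) * SR (m+9) + c3q ((m+7:ℕ):ℚ) * SR (m+10) = 0 := by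
  rw [← extendR (m+7) (m+8) (by omega) (by omega), ← extendR (m+8) (m+8) (by omega) (by omega),
      ← extendR (m+9) (m+8) (by omega) (by omega), ← extendR (m+10) (m+8) (by omega) (by omega),
      Finset.mul_sum, Finset.mul_sum, Finset.mul_sum, Finset.mul_sum,
      ← Finset.sum_add_distrib, ← Finset.sum_add_distrib, ← Finset.sum_add_distrib]
  exact sumFR m

lemma SL_eq_SR : ∀ n : ℕ, SL n = SR n := by
  intro n
  induction n using Nat.strong_induction_on with
  | _ n ih =>
    rcases lt_or_ge n 10 with h | h
    · interval_cases n <;>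
        · unfold SL SR
          norm_num [FL, FR, Finset.sum_range_succ, Nat.choose]
    · obtain ⟨m, rfl⟩ : ∃ m, n = m+10 := ⟨n-10, by omega⟩
      have hL := recL (m+7)
      rw [show m+7+1 = m+8 by ring, show m+7+2 = m+9 by ring, show m+7+3 = m+10 by ring] at hL
      have hR := recR m
      have e1 : SL (m+7) = SR (m+7) := ih _ (by omega)
      have e2 : SL (m+8) = SR (m+8) := ih _ (by omega)
      have e3 : SL (m+9) = SR (m+9) := ih _ (by omega)
      have hc : c3q ((m+7:ℕ):ℚ) ≠ 0 := by
        unfold c3q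
        positivity
      have key : c3q ((m+7:ℕ):ℚ) * SL (m+10) = c3q ((m+7:ℕ):ℚ) * SR (m+10) := by
        linear_combination hL - hR - c0q ((m+7:ℕ):ℚ) * e1 - c1q ((m+7:ℕ):ℚ) * e2
          - c2q ((m+7:ℕ):ℚ) * e3
      exact mul_left_cancel₀ hc key


/-- Identity (4) of the paper (the `m = 1` case of identity (3)): for every `n ≥ 0`,
`∑_{p=0}^{⌊n/4⌋} (1/(4p+1))·C(5p,p)·C(n+p,5p)
  = ∑_{p=0}^{⌊n/2⌋} (−1)^p·(1/(n+1))·C(n+p,n)·C(2n−2p,n)`,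
as an identity of rational numbers. -/
theorem sum_five_catalan_eq_alternating_sum_one (n : ℕ) :
    ∑ p ∈ Finset.range (n / 4 + 1),
      ((1 : ℚ) / (4 * p + 1)) * (Nat.choose (5 * p) p) * (Nat.choose (n + p) (5 * p))
      = ∑ p ∈ Finset.range (n / 2 + 1),
          (-1 : ℚ) ^ p * ((1 : ℚ) / (n + 1)) * (Nat.choose (n + p) n) *
            (Nat.choose (2 * n - 2 * p) n) := by
  have h := SL_eq_SR n
  unfold SL SR FL FR at h
  convert h using 2
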